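/- arXiv:2203.07149 — 2 statements merged into one kernel-verified Lean document; each statement's English description precedes it below -/
import Mathlib

section
/- For real numbers α, β ≥ 0 and an integer d ≥ 1, let □_d(α,β) = {(x_1,…,x_d) ∈ ℝ_{≥0}^d : for all 1 ≤ j ≤ d, x_j + x_{j+1} + … + x_d ≤ α + (d−j)β}. Then d! · vol(□_d(α,β)) = α(α + dβ)^{d−1}, where vol denotes the d-dimensional Lebesgue measure. -/
/-!
Slicing along the last coordinate `x_d = t` with `0 ≤ t ≤ α` leaves exactly the polytope
`□_{d-1}(α + β - t, β)`, so `vol □_{d+1}(α, β) = ∫₀^α vol □_d(α + β - t, β) dt`. The claimed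
volume `V_d(a) = a (a + dβ)^{d-1} / d!` satisfies `V_{d+1}' (a) = V_d (a + β)` and `V_{d+1}(0) = 0`,
so it solves this recursion, starting from `V_1(a) = a`.
-/

open MeasureTheory Finset

def stairPolytope (d : ℕ) (α β : ℝ) : Set (Fin d → ℝ) :=
  {x | (∀ i, 0 ≤ x i) ∧
    ∀ j : Fin d, ∑ i ∈ univ.filter (fun i => j ≤ i), x i ≤ α + ((d - 1 - (j : ℕ) : ℕ) : ℝ) * β}

theorem measurableSet_stairPolytope (d : ℕ) (α β : ℝ) :
    MeasurableSet (stairPolytope d α β) := by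
  simp only [stairPolytope, Set.ofPred_and, Set.ofPred_forall]
  exact .inter (.iInter fun i => measurableSet_le measurable_const (measurable_pi_apply i))
    (.iInter fun j => measurableSet_le (by fun_prop) measurable_const)

theorem volume_eq_lintegral_volume_snoc {n : ℕ} {s : Set (Fin (n + 1) → ℝ)}
    (hs : MeasurableSet s) :
    volume s = ∫⁻ t, volume {y : Fin n → ℝ | Fin.snoc y t ∈ s} := by
  have he := (volume_preserving_piFinSuccAbove (fun _ : Fin (n + 1) => ℝ) (Fin.last n)).symm
  rw [← he.measure_preimage hs.nullMeasurableSet, Measure.volume_eq_prod,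
    Measure.prod_apply (hs.preimage he.measurable)]
  simp [MeasurableEquiv.piFinSuccAbove_symm_apply, Fin.insertNthEquiv, Fin.insertNth_last']
  rfl

theorem sum_filter_castSucc_le {M : Type*} [AddCommMonoid M] {n : ℕ} (j : Fin n)
    (x : Fin (n + 1) → M) :
    ∑ i ∈ univ.filter (fun i => j.castSucc ≤ i), x i
      = ∑ i ∈ univ.filter (fun i => j ≤ i), x i.castSucc + x (Fin.last n) := by
  simp [sum_filter, Fin.sum_univ_castSucc, Fin.le_last]

theorem sum_filter_last_le {M : Type*} [AddCommMonoid M] {n : ℕ} (x : Fin (n + 1) → M) :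
    ∑ i ∈ univ.filter (fun i => Fin.last n ≤ i), x i = x (Fin.last n) := by
  simp [sum_filter]

theorem snoc_mem_stairPolytope_iff {d : ℕ} {α β t : ℝ} {y : Fin d → ℝ} :
    Fin.snoc y t ∈ stairPolytope (d + 1) α β ↔
      t ∈ Set.Icc 0 α ∧ y ∈ stairPolytope d (α + β - t) β := by
  have hbound (j : Fin d) :
      α + ((d - (j : ℕ) : ℕ) : ℝ) * β - t = α + β - t + ((d - 1 - (j : ℕ) : ℕ) : ℝ) * β := by
    rw [show d - (j : ℕ) = d - 1 - j + 1 by omega]; push_cast; ring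
  simp only [stairPolytope, Set.mem_ofPred_eq, Fin.forall_fin_succ', sum_filter_castSucc_le,
    sum_filter_last_le, Fin.snoc_castSucc, Fin.snoc_last, Fin.val_castSucc, Fin.val_last,
    Set.mem_Icc, Nat.add_sub_cancel, Nat.sub_self, Nat.cast_zero, zero_mul, add_zero,
    ← le_sub_iff_add_le, hbound]
  tauto

theorem volume_stairPolytope_succ (d : ℕ) (α β : ℝ) :
    volume (stairPolytope (d + 1) α β)
      = ∫⁻ t in Set.Icc 0 α, volume (stairPolytope d (α + β - t) β) := by
  rw [volume_eq_lintegral_volume_snoc (measurableSet_stairPolytope _ _ _),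
    ← lintegral_indicator measurableSet_Icc]
  congr! with t
  simp only [snoc_mem_stairPolytope_iff, Set.indicator_apply]
  split_ifs with ht <;> simp [ht]

/-- `V_{n+1}(a)` in the notation above. -/
noncomputable def stairVolume (n : ℕ) (β a : ℝ) : ℝ :=
  a * (a + (n + 1) * β) ^ n / (n + 1).factorial

theorem stairVolume_nonneg (n : ℕ) {β a : ℝ} (hβ : 0 ≤ β) (ha : 0 ≤ a) :
    0 ≤ stairVolume n β a := by
  unfold stairVolume; positivity

@[fun_prop]
theorem continuous_stairVolume (n : ℕ) (β : ℝ) : Continuous (stairVolume n β) := by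
  unfold stairVolume; fun_prop

theorem hasDerivAt_stairVolume_succ (n : ℕ) (β a : ℝ) :
    HasDerivAt (stairVolume (n + 1) β) (stairVolume n β (a + β)) a := by
  set c : ℝ := ((n + 1 : ℕ) + 1 : ℝ) * β
  set k : ℝ := ((n + 1 + 1).factorial : ℝ)
  have h : HasDerivAt (fun x => x * (x + c) ^ (n + 1) / k)
      ((1 * (a + c) ^ (n + 1) + a * ((n + 1 : ℕ) * (a + c) ^ n * 1)) / k) a := by
    simpa using ((hasDerivAt_id' a).mul (((hasDerivAt_id' a).add_const c).pow (n + 1))).div_const k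
  refine h.congr_deriv ?_
  simp only [stairVolume, c, k, Nat.factorial_succ (n + 1)]
  push_cast
  field_simp
  ring

theorem integral_stairVolume (n : ℕ) (α β : ℝ) :
    ∫ t in (0 : ℝ)..α, stairVolume n β (α + β - t) = stairVolume (n + 1) β α := by
  have hderiv (t : ℝ) : HasDerivAt (fun t => -stairVolume (n + 1) β (α - t))
      (stairVolume n β (α + β - t)) t :=
    ((hasDerivAt_stairVolume_succ n β (α - t)).comp_const_sub α t).neg.congr_deriv
      (by rw [neg_neg, sub_add_eq_add_sub])
  rw [intervalIntegral.integral_eq_sub_of_hasDerivAt (fun t _ => hderiv t)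
    (Continuous.intervalIntegrable (by fun_prop) _ _)]
  simp [stairVolume]

theorem volume_stairPolytope (n : ℕ) {α β : ℝ} (hα : 0 ≤ α) (hβ : 0 ≤ β) :
    volume (stairPolytope (n + 1) α β) = ENNReal.ofReal (stairVolume n β α) := by
  induction n generalizing α with
  | zero =>
    have huniv (γ : ℝ) : stairPolytope 0 γ β = Set.univ := by ext x; simp [stairPolytope]
    rw [volume_stairPolytope_succ]
    simp [huniv, stairVolume, volume_pi]
  | succ n ih =>
    rw [volume_stairPolytope_succ, setLIntegral_congr_fun measurableSet_Icc
      (fun t ht => ih (α := α + β - t) (by linarith [ht.2])),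
      ← ofReal_integral_eq_lintegral_ofReal, integral_Icc_eq_integral_Ioc,
      ← intervalIntegral.integral_of_le hα, integral_stairVolume]
    · exact Continuous.integrableOn_Icc (by fun_prop)
    · filter_upwards [ae_restrict_mem measurableSet_Icc] with t ht
      exact stairVolume_nonneg n hβ (by linarith [ht.2])

theorem stmt_0 (d : ℕ) (hd : 1 ≤ d) (α β : ℝ) (hα : 0 ≤ α) (hβ : 0 ≤ β) :
    (d.factorial : ℝ) *
      (volume {x : Fin d → ℝ | (∀ i, 0 ≤ x i) ∧
        ∀ j : Fin d, ∑ i ∈ Finset.univ.filter (fun i => j ≤ i), x i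
          ≤ α + ((d - 1 - (j : ℕ) : ℕ) : ℝ) * β}).toReal
      = α * (α + d * β) ^ (d - 1) := by
  obtain ⟨n, rfl⟩ := Nat.exists_eq_add_of_le' hd
  rw [← stairPolytope, volume_stairPolytope n hα hβ,
    ENNReal.toReal_ofReal (stairVolume_nonneg n hβ hα), stairVolume]
  push_cast
  field_simp
end

section
/- Let d ≥ 1 and let t_1 ≥ t_2 ≥ … ≥ t_d ≥ 0 be real numbers. Define □(t_1,…,t_d) = {(x_1,…,x_d) ∈ ℝ_{≥0}^d : x_j + x_{j+1} + … + x_d ≤ t_j for all 1 ≤ j ≤ d}. If θ ≥ t_i − t_{i+1} for all 1 ≤ i ≤ d−1, then □(t_1,…,t_d) ⊆ □_d(t_d, θ) where □_d(α,β) = {x ∈ ℝ_{≥0}^d : ∑_{i=j}^d x_i ≤ α + (d−j)β for all j}. Consequently vol(□(t_1,…,t_d)) ≤ (1/d!)·t_d·(t_d + dθ)^{d−1}. -/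
/-!
Telescoping the steps `t i - t (i + 1) ≤ θ` gives `t j ≤ t d + (d - j) θ`, so `□(t₁, …, t_d)` lies in
`□_d(t_d, θ)`. Slicing `□_d(α, β)` at `x_d = s` leaves `□_{d-1}(α + β - s, β)`, so by induction on `d`
and an elementary one-variable integral, `d! · vol □_d(α, β) = α (α + d β)^(d-1)` for `α, β ≥ 0`;
monotonicity of the measure then bounds `vol □(t₁, …, t_d)`.
-/

open MeasureTheory Finset

/-- `nestedBox n c` is the paper's `□(c 1, …, c n)`: coordinate `j : Fin n` plays `x_{j+1}`. -/
def nestedBox (n : ℕ) (c : ℕ → ℝ) : Set (Fin n → ℝ) :=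
  {x | (∀ i, 0 ≤ x i) ∧ ∀ j : Fin n, ∑ i ∈ univ.filter (fun i => j ≤ i), x i ≤ c ((j : ℕ) + 1)}

/-- The paper's `□_n(α, β)`. -/
def linearBox (n : ℕ) (α β : ℝ) : Set (Fin n → ℝ) :=
  nestedBox n fun k => α + ((n - k : ℕ) : ℝ) * β

theorem measurableSet_nestedBox (n : ℕ) (c : ℕ → ℝ) : MeasurableSet (nestedBox n c) :=
  measurableSet_setOfPred.2 (by fun_prop)

theorem nestedBox_zero (c : ℕ → ℝ) : nestedBox 0 c = Set.univ :=
  Set.eq_univ_of_forall fun _ => ⟨fun i => i.elim0, fun j => j.elim0⟩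

theorem nestedBox_mono {n : ℕ} {c c' : ℕ → ℝ} (h : ∀ k, 1 ≤ k → k ≤ n → c k ≤ c' k) :
    nestedBox n c ⊆ nestedBox n c' :=
  fun _ ⟨hx0, hx⟩ => ⟨hx0, fun j => (hx j).trans (h _ (by omega) j.isLt)⟩

theorem nestedBox_congr {n : ℕ} {c c' : ℕ → ℝ} (h : ∀ k, 1 ≤ k → k ≤ n → c k = c' k) :
    nestedBox n c = nestedBox n c' :=
  (nestedBox_mono fun k h₁ h₂ => (h k h₁ h₂).le).antisymm
    (nestedBox_mono fun k h₁ h₂ => (h k h₁ h₂).ge)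

theorem sum_filter_last_le_snoc {n : ℕ} (y : Fin n → ℝ) (s : ℝ) :
    ∑ i ∈ univ.filter (fun i : Fin (n + 1) => Fin.last n ≤ i), Fin.snoc y s i = s := by
  have : univ.filter (fun i : Fin (n + 1) => Fin.last n ≤ i) = {Fin.last n} := by
    ext i; simp [Fin.last_le_iff]
  rw [this, sum_singleton, Fin.snoc_last]

theorem sum_filter_castSucc_le_snoc {n : ℕ} (y : Fin n → ℝ) (s : ℝ) (j : Fin n) :
    ∑ i ∈ univ.filter (fun i : Fin (n + 1) => j.castSucc ≤ i), Fin.snoc y s i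
      = ∑ i ∈ univ.filter (fun i : Fin n => j ≤ i), y i + s := by
  rw [sum_filter, sum_filter, Fin.sum_univ_castSucc]
  simp [Fin.castSucc_le_castSucc_iff, Fin.le_last]

theorem snoc_mem_nestedBox_iff {n : ℕ} {c : ℕ → ℝ} {y : Fin n → ℝ} {s : ℝ} :
    Fin.snoc y s ∈ nestedBox (n + 1) c ↔
      s ∈ Set.Icc 0 (c (n + 1)) ∧ y ∈ nestedBox n fun k => c k - s := by
  simp only [nestedBox, Set.mem_ofPred_eq, Fin.forall_fin_succ', Fin.snoc_castSucc, Fin.snoc_last,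
    sum_filter_castSucc_le_snoc, sum_filter_last_le_snoc, Fin.val_castSucc, Fin.val_last,
    Set.mem_Icc, le_sub_iff_add_le]
  tauto

theorem volume_nestedBox_succ (n : ℕ) (c : ℕ → ℝ) :
    volume (nestedBox (n + 1) c)
      = ∫⁻ s in Set.Icc 0 (c (n + 1)), volume (nestedBox n fun k => c k - s) := by
  let e := MeasurableEquiv.piFinSuccAbove (fun _ : Fin (n + 1) => ℝ) (Fin.last n)
  have he : MeasurePreserving e.symm :=
    (volume_preserving_piFinSuccAbove (fun _ : Fin (n + 1) => ℝ) (Fin.last n)).symm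
  have hslice (s : ℝ) : Prod.mk s ⁻¹' (e.symm ⁻¹' nestedBox (n + 1) c)
      = if s ∈ Set.Icc 0 (c (n + 1)) then nestedBox n (fun k => c k - s) else ∅ := by
    ext y
    have : e.symm (s, y) = Fin.snoc y s := by ext; simp [e, Fin.insertNthEquiv_last]
    split_ifs <;> simp_all [snoc_mem_nestedBox_iff]
  rw [← he.measure_preimage (measurableSet_nestedBox _ _).nullMeasurableSet,
    Measure.volume_eq_prod, Measure.prod_apply (e.symm.measurable (measurableSet_nestedBox _ _)),
    ← lintegral_indicator measurableSet_Icc]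
  refine lintegral_congr fun s => ?_
  rw [hslice]
  split_ifs with hs <;> simp [hs]

theorem volume_nestedBox_one (c : ℕ → ℝ) : volume (nestedBox 1 c) = ENNReal.ofReal (c 1) := by
  simp [volume_nestedBox_succ, nestedBox_zero, Measure.volume_pi_eq_dirac isEmptyElim]

theorem integral_linearBox_slice (α β : ℝ) (n : ℕ) :
    ∫ s in (0 : ℝ)..α, (α + β - s) * (α + (n + 2) * β - s) ^ n
      = α * (α + (n + 2) * β) ^ (n + 1) / (n + 2) := by
  set B := α + (n + 2) * β
  have hF (s : ℝ) : HasDerivAt (fun s => β * (B - s) ^ (n + 1) - (B - s) ^ (n + 2) / (n + 2))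
      ((α + β - s) * (B - s) ^ n) s := by
    have h : HasDerivAt (fun s => B - s) (-1) s := (hasDerivAt_id s).const_sub B
    refine (((h.fun_pow (n + 1)).const_mul β).fun_sub
      ((h.fun_pow (n + 2)).div_const (n + 2))).congr_deriv ?_
    push_cast
    field_simp
    ring
  rw [intervalIntegral.integral_eq_sub_of_hasDerivAt (fun s _ => hF s)
    (Continuous.intervalIntegrable (by fun_prop) _ _)]
  simp only [B]
  field_simp
  ring

theorem volume_linearBox {α β : ℝ} (hα : 0 ≤ α) (hβ : 0 ≤ β) (n : ℕ) :
    volume (linearBox (n + 1) α β)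
      = ENNReal.ofReal (α * (α + (n + 1) * β) ^ n / (n + 1).factorial) := by
  induction n generalizing α with
  | zero => simp [linearBox, volume_nestedBox_one]
  | succ n ih =>
    have hslice (s : ℝ) : (nestedBox (n + 1) fun k => α + ((n + 1 + 1 - k : ℕ) : ℝ) * β - s)
        = linearBox (n + 1) (α + β - s) β :=
      nestedBox_congr fun k _ hk => by
        rw [Nat.cast_sub hk, Nat.cast_sub (by omega)]; push_cast; ring
    have hslice_vol (s : ℝ) (hs : s ∈ Set.Icc 0 α) :
        volume (nestedBox (n + 1) fun k => α + ((n + 1 + 1 - k : ℕ) : ℝ) * β - s)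
          = ENNReal.ofReal ((α + β - s) * (α + (n + 2) * β - s) ^ n / (n + 1).factorial) := by
      rw [hslice, ih (by linarith [hs.2])]
      congr 2
      ring
    have hnonneg : 0 ≤ᵐ[volume.restrict (Set.Icc 0 α)]
        fun s => (α + β - s) * (α + (n + 2) * β - s) ^ n / (n + 1).factorial := by
      refine (ae_restrict_iff' measurableSet_Icc).2 (ae_of_all _ fun s hs => ?_)
      have : 0 ≤ α + (n + 2) * β - s := by nlinarith [hs.2]
      have : 0 ≤ α + β - s := by linarith [hs.2]
      positivity
    rw [linearBox, volume_nestedBox_succ, Nat.sub_self, Nat.cast_zero, zero_mul, add_zero,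
      setLIntegral_congr_fun measurableSet_Icc hslice_vol,
      ← ofReal_integral_eq_lintegral_ofReal (Continuous.integrableOn_Icc (by fun_prop)) hnonneg,
      integral_Icc_eq_integral_Ioc, ← intervalIntegral.integral_of_le hα,
      intervalIntegral.integral_div, integral_linearBox_slice, Nat.factorial_succ (n + 1)]
    congr 1
    push_cast
    field_simp
    ring

theorem le_add_mul_of_sub_succ_le {t : ℕ → ℝ} {θ : ℝ} {d : ℕ}
    (hθ : ∀ i, 1 ≤ i → i < d → t i - t (i + 1) ≤ θ) {k : ℕ} (hk : 1 ≤ k) (hkd : k ≤ d) :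
    t k ≤ t d + ((d - k : ℕ) : ℝ) * θ := by
  induction hkd using Nat.decreasingInduction with
  | self => simp
  | of_succ k hkd ih =>
    have hstep := hθ k hk hkd
    have hrest := ih (by omega)
    rw [Nat.sub_succ', Nat.cast_sub (by omega)] at hrest
    push_cast at hrest
    linarith

theorem stmt_9 (d : ℕ) (hd : 1 ≤ d) (t : ℕ → ℝ) (θ : ℝ)
    (hdec : ∀ i, 1 ≤ i → i < d → t (i + 1) ≤ t i)
    (hnn : 0 ≤ t d)
    (hθ : ∀ i, 1 ≤ i → i < d → t i - t (i + 1) ≤ θ) :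
    ({x : Fin d → ℝ | (∀ i, 0 ≤ x i) ∧
        ∀ j : Fin d, ∑ i ∈ Finset.univ.filter (fun i => j ≤ i), x i ≤ t ((j : ℕ) + 1)}
      ⊆ {x : Fin d → ℝ | (∀ i, 0 ≤ x i) ∧
        ∀ j : Fin d, ∑ i ∈ Finset.univ.filter (fun i => j ≤ i), x i
          ≤ t d + ((d - 1 - (j : ℕ) : ℕ) : ℝ) * θ})
    ∧ (volume {x : Fin d → ℝ | (∀ i, 0 ≤ x i) ∧
        ∀ j : Fin d, ∑ i ∈ Finset.univ.filter (fun i => j ≤ i), x i ≤ t ((j : ℕ) + 1)}).toReal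
      ≤ (1 / d.factorial : ℝ) * t d * (t d + d * θ) ^ (d - 1) := by
  have hsub : nestedBox d t ⊆ linearBox d (t d) θ :=
    nestedBox_mono fun k hk hkd => le_add_mul_of_sub_succ_le hθ hk hkd
  refine ⟨fun x hx => ?_, ?_⟩
  · obtain ⟨hx0, hx⟩ := hsub hx
    refine ⟨hx0, fun j => (hx j).trans_eq ?_⟩
    rw [Nat.sub_sub, Nat.add_comm 1]
  obtain ⟨n, rfl⟩ : ∃ n, d = n + 1 := ⟨d - 1, by omega⟩
  -- for `d = 1` the sign of `θ` is unconstrained, but the bound does not involve `θ`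
  rcases n.eq_zero_or_pos with rfl | hn
  · change (volume (nestedBox 1 t)).toReal ≤ _
    simp [volume_nestedBox_one, hnn]
  have hθ0 : 0 ≤ θ := by linarith [hdec 1 le_rfl (by omega), hθ 1 le_rfl (by omega)]
  have hbound : 0 ≤ t (n + 1) * (t (n + 1) + (n + 1) * θ) ^ n / (n + 1).factorial := by
    positivity
  calc (volume (nestedBox (n + 1) t)).toReal
      ≤ t (n + 1) * (t (n + 1) + (n + 1) * θ) ^ n / (n + 1).factorial :=
        ENNReal.toReal_le_of_le_ofReal hbound
          ((measure_mono hsub).trans (volume_linearBox hnn hθ0 n).le)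
    _ = _ := by push_cast; ring
end
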